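/- Reduction of R factors computes the global R factor: if a tall matrix A is partitioned into row blocks A₁, ..., A_p, and Rᵢ is the R factor of a QR factorization of Aᵢ, then the R factor (with positive diagonal) of the stacked matrix [R₁; ...; R_p] equals the R factor (with positive diagonal) of A, assuming A has full column rank. -/

import Mathlib

/-!
Since each `Qᵢ` has orthonormal columns, `AᵢᵀAᵢ = RᵢᵀRᵢ`, so the stacked matrix `[R₁; …; R_p]`
and `A` have the same Gram matrix. An upper triangular factor with positive diagonal of a
Gram matrix is unique: if `SᵀS = TᵀT` then `U = ST⁻¹` is upper triangular and
orthogonal, so `Uᵀ = U⁻¹` is upper triangular as well, hence `U` is diagonal with entries `±1`,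
and the positive diagonals force `U = 1`.
-/

open Matrix

namespace Matrix

lemma transpose_mul_self_mul_of_transpose_mul_self_eq_one {l m n K : Type*} [Fintype l]
    [Fintype m] [DecidableEq m] [CommRing K] {Q : Matrix l m K} (hQ : Qᵀ * Q = 1)
    (R : Matrix m n K) : (Q * R)ᵀ * (Q * R) = Rᵀ * R := by
  rw [transpose_mul, Matrix.mul_assoc, ← Matrix.mul_assoc Qᵀ, hQ, Matrix.one_mul]

variable {ι K : Type*} [Fintype ι] [LinearOrder ι]

lemma IsUpperTriangular.mul_apply_self [Semiring K] {M N : Matrix ι ι K}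
    (hM : M.IsUpperTriangular) (hN : N.IsUpperTriangular) (i : ι) :
    (M * N) i i = M i i * N i i := by
  rw [mul_apply, Finset.sum_eq_single i]
  · intro k _ hki
    rcases hki.lt_or_gt with hlt | hgt
    · rw [hM hlt, zero_mul]
    · rw [hN hgt, mul_zero]
  · simp

lemma IsUpperTriangular.isDiag_of_transpose_mul_self_eq_one [CommRing K] {U : Matrix ι ι K}
    (hU : U.IsUpperTriangular) (hUo : Uᵀ * U = 1) : U.IsDiag := by
  have := invertibleOfLeftInverse U Uᵀ hUo
  have hUt : Uᵀ.IsUpperTriangular := inv_eq_left_inv hUo ▸ blockTriangular_inv_of_blockTriangular hU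
  intro i j hij
  rcases hij.lt_or_gt with hlt | hgt
  · exact hUt hlt
  · exact hU hgt

lemma IsUpperTriangular.eq_one_of_transpose_mul_self_eq_one [CommRing K] [LinearOrder K]
    [IsStrictOrderedRing K] {U : Matrix ι ι K} (hU : U.IsUpperTriangular)
    (hpos : ∀ i, 0 < U i i) (hUo : Uᵀ * U = 1) : U = 1 := by
  have hdiag := hU.isDiag_of_transpose_mul_self_eq_one hUo
  rw [← hdiag.diagonal_diag, diagonal_transpose, diagonal_mul_diagonal, diagonal_eq_one] at hUo
  rw [← hdiag.diagonal_diag, diagonal_eq_one]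
  funext i
  exact (mul_self_eq_one_iff.mp (congr_fun hUo i)).resolve_right
    (by rw [diag_apply]; intro h; linarith [hpos i])

lemma IsUpperTriangular.eq_of_transpose_mul_self_eq [Field K] [LinearOrder K]
    [IsStrictOrderedRing K] {S T : Matrix ι ι K} (hS : S.IsUpperTriangular)
    (hSpos : ∀ i, 0 < S i i) (hT : T.IsUpperTriangular) (hTpos : ∀ i, 0 < T i i)
    (hST : Sᵀ * S = Tᵀ * T) : S = T := by
  have hTdet : IsUnit T.det := by
    rw [det_of_isUpperTriangular hT]
    exact (Finset.prod_pos fun i _ => hTpos i).ne'.isUnit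
  have := T.invertibleOfIsUnitDet hTdet
  set U := S * T⁻¹
  have hUT : U * T = S := by rw [Matrix.mul_assoc, inv_mul_of_invertible, Matrix.mul_one]
  have hU : U.IsUpperTriangular := hS.mul (blockTriangular_inv_of_blockTriangular hT)
  have hUpos (i : ι) : 0 < U i i := by
    have h := hU.mul_apply_self hT i
    rw [hUT] at h
    exact pos_of_mul_pos_left (h ▸ hSpos i) (hTpos i).le
  have hUo : Uᵀ * U = 1 := by
    calc Uᵀ * U = (T⁻¹)ᵀ * (Sᵀ * S) * T⁻¹ := by
          simp only [U, transpose_mul, Matrix.mul_assoc]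
      _ = (T * T⁻¹)ᵀ * (T * T⁻¹) := by
          rw [hST, transpose_mul]; simp only [Matrix.mul_assoc]
      _ = 1 := by simp
  rw [← hUT, hU.eq_one_of_transpose_mul_self_eq_one hUpos hUo, Matrix.one_mul]

end Matrix

theorem reduction_computes_global_R_general (p n : ℕ) (m : Fin p → ℕ)
    (A : ∀ i : Fin p, Matrix (Fin (m i)) (Fin n) ℝ)
    (Q : ∀ i : Fin p, Matrix (Fin (m i)) (Fin n) ℝ)
    (R : Fin p → Matrix (Fin n) (Fin n) ℝ)
    (hQ : ∀ i, (Q i)ᵀ * Q i = 1)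
    (hQR : ∀ i, A i = Q i * R i)
    -- S is the positive-diagonal R factor of the stacked matrix [R₁; …; R_p]
    (S : Matrix (Fin n) (Fin n) ℝ)
    (hSut : ∀ k l : Fin n, l < k → S k l = 0)
    (hSpos : ∀ k : Fin n, 0 < S k k)
    (hS : Sᵀ * S = ∑ i, (R i)ᵀ * R i)
    -- T is the positive-diagonal R factor of A
    (T : Matrix (Fin n) (Fin n) ℝ)
    (hTut : ∀ k l : Fin n, l < k → T k l = 0)
    (hTpos : ∀ k : Fin n, 0 < T k k)
    (hT : Tᵀ * T = ∑ i, (A i)ᵀ * A i) :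
    S = T := by
  have hGram : ∑ i, (R i)ᵀ * R i = ∑ i, (A i)ᵀ * A i :=
    Finset.sum_congr rfl fun i _ => by
      rw [hQR i, transpose_mul_self_mul_of_transpose_mul_self_eq_one (hQ i)]
  exact IsUpperTriangular.eq_of_transpose_mul_self_eq (fun k l h => hSut k l h) hSpos
    (fun k l h => hTut k l h) hTpos (by rw [hS, hT, hGram])

/-- Reduction of R factors computes the global R factor: if each row block Aᵢ
of a full column rank matrix A has QR factorization Aᵢ = QᵢRᵢ, then the R
factor with positive diagonal of the stacked matrix [R₁; …; R_p] equals the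
R factor with positive diagonal of A.  (The R factor with positive diagonal
of a matrix B is the unique upper triangular R with positive diagonal such
that RᵀR = BᵀB; the Gram matrix of a row-partitioned matrix is the sum of
the Gram matrices of its blocks.) -/
theorem reduction_computes_global_R (p n : ℕ) (m : Fin p → ℕ)
    (A : ∀ i : Fin p, Matrix (Fin (m i)) (Fin n) ℝ)
    (Q : ∀ i : Fin p, Matrix (Fin (m i)) (Fin n) ℝ)
    (R : Fin p → Matrix (Fin n) (Fin n) ℝ)
    (hQ : ∀ i, (Q i)ᵀ * Q i = 1)
    (hRut : ∀ i, ∀ k l : Fin n, l < k → R i k l = 0)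
    (hQR : ∀ i, A i = Q i * R i)
    -- A has full column rank, i.e. its Gram matrix ∑ᵢ AᵢᵀAᵢ is positive definite
    (hpd : (∑ i, (A i)ᵀ * A i).PosDef)
    -- S is the positive-diagonal R factor of the stacked matrix [R₁; …; R_p]
    (S : Matrix (Fin n) (Fin n) ℝ)
    (hSut : ∀ k l : Fin n, l < k → S k l = 0)
    (hSpos : ∀ k : Fin n, 0 < S k k)
    (hS : Sᵀ * S = ∑ i, (R i)ᵀ * R i)
    -- T is the positive-diagonal R factor of A
    (T : Matrix (Fin n) (Fin n) ℝ)
    (hTut : ∀ k l : Fin n, l < k → T k l = 0)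
    (hTpos : ∀ k : Fin n, 0 < T k k)
    (hT : Tᵀ * T = ∑ i, (A i)ᵀ * A i) :
    S = T :=
  reduction_computes_global_R_general p n m A Q R hQ hQR S hSut hSpos hS T hTut hTpos hT
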